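/- Let q be a real number with q > 1 and let n be a positive integer. For a composition (c_1, …, c_j) of n into positive integer parts, set a_0 = 0 and a_k = c_1 + … + c_k for 1 ≤ k ≤ j. Then Σ over all compositions (c_1, …, c_j) of n of (−1)^{n−j} · ∏_{k=1}^{j} [a_k choose a_{k−1}]_q equals q^{n(n−1)/2}. -/

import Mathlib

/-- The Gaussian binomial coefficient `[n choose k]_q` for a real base `q`. -/
noncomputable def gbinom (q : ℝ) (n k : ℕ) : ℝ :=
  ∏ j ∈ Finset.Icc 1 k, (q ^ (n - k + j) - 1) / (q ^ j - 1)

/-!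
Let `S n` be the sum with the sign `(-1)^j` in place of `(-1)^(n-j)`. Splitting off the last block
of a composition gives `S 0 = 1` and `S n = -∑_{m<n} [n choose m]_q S m` for `n > 0`, a recursion
with a unique solution. The alternating identity `∑_{k ≤ n} (-1)^k q^{k(k-1)/2} [n choose k]_q = 0`
for `n > 0`, which telescopes by the q-Pascal rule, says that `(-1)^n q^{n(n-1)/2}` solves it.
-/

open Finset

-- `(q - 1)^m [m]_q!` without the factors `q - 1`, which cancel in `gbinom`.
noncomputable def qFactorial (q : ℝ) (m : ℕ) : ℝ := ∏ j ∈ Icc 1 m, (q ^ j - 1)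

lemma choose_two_add_one (k : ℕ) : (k + 1).choose 2 = k.choose 2 + k := by
  rw [Nat.choose_two_right, Nat.choose_two_right, Nat.triangle_succ]

section GaussianBinomial

variable {q : ℝ}

lemma qFactorial_zero : qFactorial q 0 = 1 := by simp [qFactorial]

lemma qFactorial_succ (m : ℕ) : qFactorial q (m + 1) = qFactorial q m * (q ^ (m + 1) - 1) :=
  prod_Icc_succ_top (by omega) _

lemma qFactorial_eq_prod_Ioc (m : ℕ) : qFactorial q m = ∏ j ∈ Ioc 0 m, (q ^ j - 1) := by
  rw [← Icc_add_one_left_eq_Ioc, zero_add, qFactorial]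

lemma qFactorial_pos (hq : 1 < q) (m : ℕ) : 0 < qFactorial q m :=
  prod_pos fun j hj => sub_pos.2 <| one_lt_pow₀ hq (by grind)

lemma gbinom_mul_qFactorial_mul_qFactorial (hq : 1 < q) {n k : ℕ} (h : k ≤ n) :
    gbinom q n k * (qFactorial q k * qFactorial q (n - k)) = qFactorial q n := by
  have top : ∏ j ∈ Icc 1 k, (q ^ (n - k + j) - 1) = ∏ i ∈ Ioc (n - k) n, (q ^ i - 1) := by
    rw [← Icc_add_one_left_eq_Ioc, ← Nat.sub_add_cancel h, Nat.add_sub_cancel, ← map_add_left_Icc,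
      prod_map]
    rfl
  rw [gbinom, prod_div_distrib, top, ← qFactorial, ← mul_assoc,
    div_mul_cancel₀ _ (qFactorial_pos hq k).ne', qFactorial_eq_prod_Ioc,
    qFactorial_eq_prod_Ioc, mul_comm, prod_Ioc_consecutive _ (Nat.zero_le _) (Nat.sub_le n k)]

lemma gbinom_eq_div (hq : 1 < q) {n k : ℕ} (h : k ≤ n) :
    gbinom q n k = qFactorial q n / (qFactorial q k * qFactorial q (n - k)) := by
  rw [← gbinom_mul_qFactorial_mul_qFactorial hq h, mul_div_cancel_right₀]
  exact (mul_pos (qFactorial_pos hq k) (qFactorial_pos hq _)).ne'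

lemma gbinom_zero_right (n : ℕ) : gbinom q n 0 = 1 := by simp [gbinom]

lemma gbinom_self (hq : 1 < q) (n : ℕ) : gbinom q n n = 1 := by
  simp [gbinom_eq_div hq le_rfl, qFactorial_zero, (qFactorial_pos hq n).ne']

lemma gbinom_succ_succ (hq : 1 < q) {m k : ℕ} (h : k < m) :
    gbinom q (m + 1) (k + 1) = gbinom q m k + q ^ (k + 1) * gbinom q m (k + 1) := by
  obtain ⟨r, rfl⟩ := Nat.exists_eq_add_of_lt h
  rw [gbinom_eq_div hq (by omega), gbinom_eq_div hq (by omega), gbinom_eq_div hq (by omega),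
    show k + r + 1 + 1 - (k + 1) = r + 1 by omega, show k + r + 1 - k = r + 1 by omega,
    show k + r + 1 - (k + 1) = r by omega, qFactorial_succ (k + r + 1), qFactorial_succ k,
    qFactorial_succ r]
  have := qFactorial_pos hq (k + r + 1)
  have := qFactorial_pos hq k
  have := qFactorial_pos hq r
  have : 0 < q ^ (k + 1) - 1 := sub_pos.2 (one_lt_pow₀ hq (by omega))
  have : 0 < q ^ (r + 1) - 1 := sub_pos.2 (one_lt_pow₀ hq (by omega))
  field_simp
  ring

lemma sum_neg_one_pow_mul_gbinom (hq : 1 < q) {n : ℕ} (hn : 0 < n) :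
    ∑ k ∈ range (n + 1), (-1) ^ k * q ^ k.choose 2 * gbinom q n k = 0 := by
  obtain ⟨m, rfl⟩ := Nat.exists_eq_add_of_lt hn
  set t : ℕ → ℝ := fun k => (-1) ^ k * q ^ (k + 1).choose 2 * gbinom q m k
  have telescope : ∑ k ∈ range m, (-1) ^ (k + 1) * q ^ (k + 1).choose 2 * gbinom q (m + 1) (k + 1)
      = t m - t 0 := by
    rw [← sum_range_sub]
    refine sum_congr rfl fun k hk => ?_
    simp only [t]
    rw [gbinom_succ_succ hq (mem_range.1 hk), choose_two_add_one (k + 1), pow_add]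
    ring
  rw [zero_add, sum_range_succ, sum_range_succ', telescope]
  simp [t, gbinom_zero_right, gbinom_self hq, choose_two_add_one m, pow_add]

end GaussianBinomial

namespace Composition

variable {m n : ℕ}

lemma heq_of_blocks_eq {c : Composition m} {d : Composition n} (h : c.blocks = d.blocks) :
    HEq c d := by
  obtain rfl : m = n := by rw [← c.blocks_sum, ← d.blocks_sum, h]
  exact heq_of_eq (Composition.ext h)

lemma blocks_ne_nil_of_pos (c : Composition n) (hn : 0 < n) : c.blocks ≠ [] :=
  List.ne_nil_of_length_pos (c.length_pos_of_pos hn)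

def appendLast (d : Composition m) (h : m < n) : Composition n where
  blocks := d.blocks ++ [n - m]
  blocks_pos hi := by
    rcases List.mem_append.1 hi with hi | hi
    · exact d.blocks_pos hi
    · rw [List.mem_singleton.1 hi]; omega
  blocks_sum := by simp [d.blocks_sum]; omega

def dropLast (c : Composition n) : Composition c.blocks.dropLast.sum where
  blocks := c.blocks.dropLast
  blocks_pos hi := c.blocks_pos (List.dropLast_subset _ hi)
  blocks_sum := rfl

lemma sum_dropLast_add_getLast (c : Composition n) (hn : 0 < n) :
    c.blocks.dropLast.sum + c.blocks.getLast (c.blocks_ne_nil_of_pos hn) = n := by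
  conv_rhs => rw [← c.blocks_sum, ← List.dropLast_append_getLast (c.blocks_ne_nil_of_pos hn)]
  simp

lemma sum_dropLast_lt (c : Composition n) (hn : 0 < n) : c.blocks.dropLast.sum < n := by
  have := c.sum_dropLast_add_getLast hn
  have := c.blocks_pos (List.getLast_mem (c.blocks_ne_nil_of_pos hn))
  omega

def equivSigmaDropLast (hn : 0 < n) : Composition n ≃ Σ m : Fin n, Composition m where
  toFun c := ⟨⟨_, c.sum_dropLast_lt hn⟩, c.dropLast⟩
  invFun p := p.2.appendLast p.1.isLt
  left_inv c := by
    refine Composition.ext ?_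
    simp only [appendLast, dropLast]
    conv_rhs => rw [← List.dropLast_append_getLast (c.blocks_ne_nil_of_pos hn)]
    have := c.sum_dropLast_add_getLast hn
    congr
    omega
  right_inv := by
    rintro ⟨m, d⟩
    have hblocks : (d.appendLast m.isLt).blocks.dropLast = d.blocks := List.dropLast_concat
    exact Sigma.ext (Fin.ext (by simp [hblocks, d.blocks_sum]))
      (heq_of_blocks_eq hblocks)

lemma length_appendLast (d : Composition m) (h : m < n) :
    (d.appendLast h).length = d.length + 1 := by
  simp [length, appendLast]

lemma sizeUpTo_appendLast (d : Composition m) (h : m < n) {k : ℕ} (hk : k ≤ d.length) :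
    (d.appendLast h).sizeUpTo k = d.sizeUpTo k := by
  rw [sizeUpTo, sizeUpTo, appendLast, List.take_append_of_le_length (by simpa using hk)]

lemma sum_eq_sum_sigma_appendLast {M : Type*} [AddCommMonoid M] (hn : 0 < n)
    (g : Composition n → M) :
    ∑ c, g c = ∑ m : Fin n, ∑ d : Composition m, g (d.appendLast m.isLt) := by
  rw [← (equivSigmaDropLast hn).symm.sum_comp, ← univ_sigma_univ, sum_sigma]
  rfl

variable {R : Type*} [CommRing R] (f : ℕ → ℕ → R)

def chainProd (c : Composition n) : R :=
  ∏ k ∈ range c.length, f (c.sizeUpTo (k + 1)) (c.sizeUpTo k)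

lemma chainProd_appendLast (d : Composition m) (h : m < n) :
    (d.appendLast h).chainProd f = d.chainProd f * f n m := by
  rw [chainProd, length_appendLast, prod_range_succ, ← length_appendLast d h, sizeUpTo_length,
    sizeUpTo_appendLast d h le_rfl, sizeUpTo_length, chainProd]
  congr 1
  refine prod_congr rfl fun k hk => ?_
  have hk := mem_range.1 hk
  rw [sizeUpTo_appendLast d h hk.le, sizeUpTo_appendLast d h hk]

lemma sum_neg_one_pow_length_mul_chainProd_of_pos (hn : 0 < n) :
    ∑ c : Composition n, (-1) ^ c.length * c.chainProd f =
      -∑ m ∈ range n, f n m * ∑ d : Composition m, (-1) ^ d.length * d.chainProd f := by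
  rw [sum_eq_sum_sigma_appendLast hn, ← Fin.sum_univ_eq_sum_range (fun m => f n m * _),
    ← sum_neg_distrib]
  refine sum_congr rfl fun m _ => ?_
  rw [mul_sum, ← sum_neg_distrib]
  refine sum_congr rfl fun d _ => ?_
  rw [length_appendLast, chainProd_appendLast, pow_succ]
  ring

lemma sum_neg_one_pow_length_mul_chainProd_zero :
    ∑ c : Composition 0, (-1) ^ c.length * c.chainProd f = 1 := by
  have hlen (c : Composition 0) : c.length = 0 :=
    Nat.eq_zero_of_not_pos (c.length_pos_iff.not.2 (lt_irrefl 0))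
  simp [chainProd, hlen, composition_card]

lemma sum_neg_one_pow_length_mul_chainProd_eq {t : ℕ → R} (h0 : t 0 = 1)
    (ht : ∀ n, 0 < n → t n = -∑ m ∈ range n, f n m * t m) (n : ℕ) :
    ∑ c : Composition n, (-1) ^ c.length * c.chainProd f = t n := by
  induction n using Nat.strong_induction_on with
  | _ n ih =>
    rcases Nat.eq_zero_or_pos n with rfl | hn
    · rw [sum_neg_one_pow_length_mul_chainProd_zero, h0]
    · rw [sum_neg_one_pow_length_mul_chainProd_of_pos f hn, ht n hn]
      exact congrArg _ (sum_congr rfl fun m hm => by rw [ih m (mem_range.1 hm)])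

end Composition

lemma neg_one_pow_sub_eq_mul {R : Type*} [Ring R] {n k : ℕ} (h : k ≤ n) :
    (-1 : R) ^ (n - k) = (-1) ^ n * (-1) ^ k := by
  rw [← pow_sub_mul_pow (-1 : R) h, mul_assoc, ← pow_add, ← two_mul, pow_mul]
  simp

theorem stmt10_general (q : ℝ) (hq : 1 < q) (n : ℕ) :
    ∑ c : Composition n,
      (-1 : ℝ) ^ (n - c.length) *
        ∏ k ∈ Finset.range c.length, gbinom q (c.sizeUpTo (k + 1)) (c.sizeUpTo k) =
    q ^ (n * (n - 1) / 2) := by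
  have signed_sum : ∑ c : Composition n, (-1) ^ c.length * c.chainProd (gbinom q) =
      (-1) ^ n * q ^ n.choose 2 := by
    refine Composition.sum_neg_one_pow_length_mul_chainProd_eq _
      (t := fun m => (-1) ^ m * q ^ m.choose 2) (by simp) (fun m hm => ?_) n
    have alternating := sum_neg_one_pow_mul_gbinom hq hm
    rw [sum_range_succ, gbinom_self hq] at alternating
    rw [← sub_eq_zero, ← alternating, sub_neg_eq_add, add_comm, mul_one]
    exact congrArg (· + _) (sum_congr rfl fun k _ => by ring)
  calc _ = (-1) ^ n * ∑ c : Composition n, (-1) ^ c.length * c.chainProd (gbinom q) := by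
        rw [mul_sum]
        refine sum_congr rfl fun c _ => ?_
        rw [neg_one_pow_sub_eq_mul c.length_le, mul_assoc, Composition.chainProd]
    _ = q ^ (n * (n - 1) / 2) := by
        rw [signed_sum, ← mul_assoc, ← mul_pow, Nat.choose_two_right]
        simp

/-- For a composition `c = (c_1, …, c_j)` of `n`, the partial sums are
`a_k = c.sizeUpTo k = c_1 + ⋯ + c_k`, with `a_0 = 0` and `a_j = n`.  The sum over all
compositions of `n` of `(−1)^{n−j} · ∏_{k=1}^{j} [a_k choose a_{k−1}]_q` is `q^{n(n−1)/2}`. -/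
theorem stmt10 (q : ℝ) (hq : 1 < q) (n : ℕ) (hn : 0 < n) :
    ∑ c : Composition n,
      (-1 : ℝ) ^ (n - c.length) *
        ∏ k ∈ Finset.range c.length, gbinom q (c.sizeUpTo (k + 1)) (c.sizeUpTo k) =
    q ^ (n * (n - 1) / 2) :=
  stmt10_general q hq n
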